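/- If a sequence h_• of nonnegative integers is unimodal at each tail, then there exists an almost reverse lexicographic ideal I in the polynomial ring k[x_1,...,x_n] (with n = h_1 if h_1 ≥ 1, n = 1 otherwise) such that dim_k(k[x_1,...,x_n]/I)_d = h_d for all d ≥ 0. -/

import Mathlib

open scoped Classical

/-- Degree of an exponent vector (monomial). -/
def mdeg {n : ℕ} (m : Fin n → ℕ) : ℕ := ∑ i, m i

/-- Degree reverse lexicographic order: `M > N`. -/
def RevLexGT {n : ℕ} (M N : Fin n → ℕ) : Prop :=
  mdeg N < mdeg M ∨
    (mdeg M = mdeg N ∧ ∃ s : Fin n, (∀ i : Fin n, s < i → M i = N i) ∧ M s < N s)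

/-- A monomial ideal, identified with its set of monomials (exponent vectors),
is upward closed under divisibility. -/
def MonIdeal {n : ℕ} (I : Set (Fin n → ℕ)) : Prop :=
  ∀ m ∈ I, ∀ m' : Fin n → ℕ, (∀ i, m i ≤ m' i) → m' ∈ I

/-- `m` is a minimal generator of the monomial ideal `I`. -/
def MinGen {n : ℕ} (I : Set (Fin n → ℕ)) (m : Fin n → ℕ) : Prop :=
  m ∈ I ∧ ∀ m' ∈ I, (∀ i, m' i ≤ m i) → m' = m

/-- Almost reverse lexicographic ideal. -/
def ARL {n : ℕ} (I : Set (Fin n → ℕ)) : Prop :=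
  ∀ M N : Fin n → ℕ, MinGen I N → mdeg M = mdeg N → RevLexGT M N → M ∈ I

/-- Strongly stable monomial ideal. -/
def StronglyStable {n : ℕ} (I : Set (Fin n → ℕ)) : Prop :=
  MonIdeal I ∧ ∀ M ∈ I, ∀ i j : Fin n, j < i → 0 < M i →
    (fun k => if k = i then M i - 1 else if k = j then M j + 1 else M k) ∈ I

/-- The last generator `M_ω` of a monomial ideal: a minimal generator of maximal
degree which is smallest in the degree reverse lexicographic order among the
minimal generators of that degree. -/
def IsLastGen {n : ℕ} (I : Set (Fin n → ℕ)) (W : Fin n → ℕ) : Prop :=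
  MinGen I W ∧ (∀ N, MinGen I N → mdeg N ≤ mdeg W) ∧
    (∀ N, MinGen I N → mdeg N = mdeg W → N = W ∨ RevLexGT N W)

/-- `max M`: the largest (1-based) index of a variable dividing `M` (0 for `M = 1`). -/
def maxVar {n : ℕ} (m : Fin n → ℕ) : ℕ :=
  Finset.univ.sup (fun i : Fin n => if 0 < m i then i.1 + 1 else 0)

/-- Hilbert function of `R/I`: the number of monomials of degree `d` not in `I`. -/
noncomputable def hilb {n : ℕ} (I : Set (Fin n → ℕ)) (d : ℕ) : ℕ :=
  Set.ncard {m : Fin n → ℕ | mdeg m = d ∧ m ∉ I}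

/-- Truncation of an exponent vector to its first `i` coordinates. -/
def truncW {n : ℕ} (W : Fin n → ℕ) (i : ℕ) : Fin n → ℕ :=
  fun j => if j.1 < i then W j else 0

/-- The set `𝓘_i` (for `i ≤ μ-2`): exponent vectors supported on the first `i`
coordinates, coordinatewise below the `f_j`'s, i.e. not lying in `I`. -/
def Iset {n : ℕ} (I : Set (Fin n → ℕ)) (i : ℕ) : Set (Fin n → ℕ) :=
  {α | (∀ k : Fin n, i ≤ k.1 → α k = 0) ∧ α ∉ I}

/-- The set `𝓘_{μ-1}`, which additionally requires `α ≥ (ω_1,…,ω_{μ-1})`. -/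
def IsetLast {n : ℕ} (I : Set (Fin n → ℕ)) (W : Fin n → ℕ) (μ : ℕ) :
    Set (Fin n → ℕ) :=
  {α | α ∈ Iset I (μ - 1) ∧ (α = truncW W (μ - 1) ∨ RevLexGT α (truncW W (μ - 1)))}

/-- `f_{i+1}(α) = min {t : x^α x_{i+1}^t ∈ I}` (ℕ-valued, junk `0` if no such `t`). -/
noncomputable def fmin {n : ℕ} (I : Set (Fin n → ℕ)) (α : Fin n → ℕ) (i : Fin n) : ℕ :=
  sInf {t | α + Pi.single i t ∈ I}

/-- `f_{i+1}(α)` valued in `ℕ∞` (equal to `⊤` when no power works). -/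
noncomputable def fminTop {n : ℕ} (I : Set (Fin n → ℕ)) (α : Fin n → ℕ) (i : Fin n) : ℕ∞ :=
  sInf ((fun t : ℕ => (t : ℕ∞)) '' {t | α + Pi.single i t ∈ I})

/-- Iterated truncated difference sequence `h^{(i)}`. -/
def hseq (h : ℕ → ℕ) : ℕ → ℕ → ℕ
  | 0, d => h d
  | _ + 1, 0 => 1
  | i + 1, e + 1 => hseq h i (e + 1) - hseq h i e

/-- The set whose infimum is `r_i(h)`. -/
def rset (h : ℕ → ℕ) (i : ℕ) : Set ℕ :=
  {d | 1 ≤ d ∧ hseq h i d ≤ hseq h i (d - 1)}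

/-- `D(h) = min {i : r_i < ∞}`. -/
noncomputable def Dval (h : ℕ → ℕ) : ℕ := sInf {i | (rset h i).Nonempty}

/-- `h` is unimodal at each tail. -/
def UnimodalAtTails (h : ℕ → ℕ) : Prop :=
  ∀ i, Dval h ≤ i → i < max 1 (h 1) →
    ∀ d, (∃ r ∈ rset h i, r ≤ d) → hseq h i d ≤ hseq h i (d - 1)

/-- The polynomial `Π (1 - z^{d_i})`. -/
noncomputable def froPoly (ds : List ℕ) : Polynomial ℤ :=
  (ds.map (fun d => 1 - Polynomial.X ^ d)).prod

/-- Coefficient of `z^i` in the power series `Π (1 - z^{d_i}) / (1-z)^n`. -/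
noncomputable def froCoeff (n : ℕ) (ds : List ℕ) (i : ℕ) : ℤ :=
  ∑ j ∈ Finset.range (i + 1),
    (froPoly ds).coeff j * (Nat.choose (n - 1 + (i - j)) (i - j) : ℤ)

/-- The Fröberg sequence `|n; d_1,…,d_m|`: the truncation `| · |` of the power
series `Π (1 - z^{d_i}) / (1-z)^n`. -/
noncomputable def fro (n : ℕ) (ds : List ℕ) (i : ℕ) : ℕ :=
  if ∀ j ≤ i, 0 < froCoeff n ds j then (froCoeff n ds i).toNat else 0

/-! Build the ideal degree by degree. In degree `d + 1` the *candidates* are the monomials all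
of whose divisors of degree `d` are standard; keep the `h_{d+1}` smallest candidates in degrevlex
as standard monomials and put all other monomials of degree `d + 1` into the ideal. A minimal
generator is a candidate, so every monomial of its degree above it in degrevlex lies in the ideal:
the ideal is almost revlex.

The standard monomials are closed under `x_i ↦ x_j` for `i < j`, so division by `x_v` maps the
candidates whose last variable is `x_v` bijectively onto the standard monomials of the previous
degree in `x_1, …, x_v`. Since monomials in fewer variables are degrevlex-larger, induction on the
degree shows that exactly `h^{(n-j)}_d` standard monomials of degree `d` lie in `x_1, …, x_j`.
Unimodality at the tails forces `h^{(n)}_{d+1} = 0`, i.e. `h_{d+1} ≤ ∑_{l<n} h^{(l)}_d`, and the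
right-hand side counts the candidates, so there is always room for `h_{d+1}` of them. -/

namespace Finset

variable {α : Type*} (r : α → α → Prop)

noncomputable def rankIn (T : Finset α) (x : α) : ℕ := #{y ∈ T | ¬ r x y}

noncomputable def lowest (T : Finset α) (k : ℕ) : Finset α := {x ∈ T | rankIn r T x ≤ k}

variable {r} {T : Finset α}

theorem lowest_subset {k : ℕ} : lowest r T k ⊆ T := filter_subset _ _

theorem lowest_mono {k l : ℕ} (hkl : k ≤ l) : lowest r T k ⊆ lowest r T l :=
  fun _ hx => mem_filter.2 ⟨(mem_filter.1 hx).1, (mem_filter.1 hx).2.trans hkl⟩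

variable [IsStrictTotalOrder α r]

theorem rankIn_lt_rankIn {x y : α} (hy : y ∈ T) (hxy : r x y) : rankIn r T x < rankIn r T y := by
  refine card_lt_card ⟨fun z hz => ?_, fun hsub => ?_⟩
  · simp only [mem_filter] at hz ⊢
    exact ⟨hz.1, fun hyz => hz.2 (trans_of r hxy hyz)⟩
  · exact (mem_filter.1 (hsub (mem_filter.2 ⟨hy, irrefl y⟩))).2 hxy

theorem rankIn_injOn : Set.InjOn (rankIn r T) T := by
  intro x hx y hy hxy
  rcases trichotomous (r := r) x y with h | h | h
  · exact absurd hxy (rankIn_lt_rankIn hy h).ne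
  · exact h
  · exact absurd hxy (rankIn_lt_rankIn hx h).ne'

theorem image_rankIn : T.image (rankIn r T) = Icc 1 #T := by
  refine eq_of_subset_of_card_le (fun s hs => ?_) ?_
  · obtain ⟨x, hx, rfl⟩ := mem_image.1 hs
    exact mem_Icc.2 ⟨card_pos.2 ⟨x, mem_filter.2 ⟨hx, irrefl x⟩⟩, card_filter_le _ _⟩
  · rw [card_image_of_injOn rankIn_injOn, Nat.card_Icc, Nat.add_sub_cancel]

theorem card_lowest {k : ℕ} (hk : k ≤ #T) : #(lowest r T k) = k := by
  have : (lowest r T k).image (rankIn r T) = Icc 1 k := by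
    rw [lowest, ← filter_image (p := (· ≤ k)), image_rankIn]
    ext s
    simp only [mem_filter, mem_Icc]
    omega
  rw [← card_image_of_injOn ((rankIn_injOn (r := r)).mono (coe_subset.2 lowest_subset)), this,
    Nat.card_Icc, Nat.add_sub_cancel]

theorem mem_lowest_of_rel {k : ℕ} {x y : α} (hx : x ∈ lowest r T k) (hy : y ∈ T) (hyx : r y x) :
    y ∈ lowest r T k := by
  rw [lowest, mem_filter] at hx ⊢
  exact ⟨hy, (rankIn_lt_rankIn hx.1 hyx).le.trans hx.2⟩

theorem lowest_card_eq_self {B : Finset α} (hBT : B ⊆ T) (hB : ∀ b ∈ B, ∀ a ∈ T, r a b → a ∈ B) :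
    lowest r T #B = B := by
  refine (eq_of_subset_of_card_le (s := B) (fun b hb => ?_)
    (card_lowest (r := r) (card_le_card hBT)).le).symm
  have hsub : {a ∈ T | ¬ r b a} ⊆ B := fun a ha => by
    obtain ⟨haT, hba⟩ := mem_filter.1 ha
    rcases trichotomous (r := r) a b with hab | rfl | hab
    · exact hB b hb a haT hab
    · exact hb
    · exact absurd hab hba
  exact mem_filter.2 ⟨hBT hb, (card_le_card hsub : rankIn r T b ≤ #B)⟩

theorem card_filter_lowest {k : ℕ} (hk : k ≤ #T) {p : α → Prop} [DecidablePred p]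
    (hp : ∀ a ∈ T, ∀ b ∈ T, p a → ¬ p b → r b a) :
    #{x ∈ lowest r T k | p x} = k - #{x ∈ T | ¬ p x} := by
  set B := T.filter (fun x => ¬ p x)
  have hB : lowest r T #B = B := lowest_card_eq_self (filter_subset _ _) fun b hb a ha hab => by
    obtain ⟨hbT, hpb⟩ := mem_filter.1 hb
    exact mem_filter.2 ⟨ha, fun hpa => asymm hab (hp a ha b hbT hpa hpb)⟩
  have hsdiff : {x ∈ lowest r T k | p x} = lowest r T k \ lowest r T #B := by
    ext x
    rw [hB]
    simp only [mem_filter, mem_sdiff, lowest, B]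
    tauto
  rw [hsdiff]
  rcases le_total #B k with hBk | hkB
  · rw [card_sdiff_of_subset (lowest_mono hBk), card_lowest hk, card_lowest (hBk.trans hk)]
  · rw [sdiff_eq_empty_iff_subset.2 (lowest_mono hkB), card_empty, Nat.sub_eq_zero_of_le hkB]

end Finset

section Monomial

variable {n : ℕ}

theorem mdeg_add (a b : Fin n → ℕ) : mdeg (a + b) = mdeg a + mdeg b :=
  Finset.sum_add_distrib

theorem mdeg_single (i : Fin n) (t : ℕ) : mdeg (Pi.single i t) = t := by
  simp [mdeg, Finset.sum_pi_single']

theorem mdeg_eq_zero_iff {m : Fin n → ℕ} : mdeg m = 0 ↔ m = 0 := by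
  simp [mdeg, Finset.sum_eq_zero_iff, funext_iff]

theorem sub_single_add_single {m : Fin n → ℕ} {i : Fin n} (hi : 0 < m i) :
    m - Pi.single i 1 + Pi.single i 1 = m := by
  ext k
  rcases eq_or_ne k i with rfl | hk
  · simp only [Pi.add_apply, Pi.sub_apply, Pi.single_eq_same]
    omega
  · simp only [Pi.add_apply, Pi.sub_apply, Pi.single_eq_of_ne hk, tsub_zero, add_zero]

theorem mdeg_sub_single {m : Fin n → ℕ} {i : Fin n} (hi : 0 < m i) :
    mdeg (m - Pi.single i 1) + 1 = mdeg m := by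
  conv_rhs => rw [← sub_single_add_single hi]
  rw [mdeg_add, mdeg_single]

end Monomial

section RevLex

variable {n : ℕ}

theorem revLexGT_irrefl (A : Fin n → ℕ) : ¬ RevLexGT A A := by
  rintro (hlt | ⟨-, s, -, hs⟩) <;> omega

theorem RevLexGT.trans {A B C : Fin n → ℕ} (hAB : RevLexGT A B) (hBC : RevLexGT B C) :
    RevLexGT A C := by
  rcases hAB with hlt₁ | ⟨hdeg₁, s₁, heq₁, hlt₁⟩ <;>
    rcases hBC with hlt₂ | ⟨hdeg₂, s₂, heq₂, hlt₂⟩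
  · exact Or.inl (hlt₂.trans hlt₁)
  · exact Or.inl (hdeg₂ ▸ hlt₁)
  · exact Or.inl (hdeg₁ ▸ hlt₂)
  refine Or.inr ⟨hdeg₁.trans hdeg₂, ?_⟩
  rcases lt_trichotomy s₁ s₂ with hs | rfl | hs
  · exact ⟨s₂, fun i hi => (heq₁ i (hs.trans hi)).trans (heq₂ i hi), heq₁ s₂ hs ▸ hlt₂⟩
  · exact ⟨s₁, fun i hi => (heq₁ i hi).trans (heq₂ i hi), hlt₁.trans hlt₂⟩
  · exact ⟨s₁, fun i hi => (heq₁ i hi).trans (heq₂ i (hs.trans hi)), hlt₁.trans_eq (heq₂ s₁ hs)⟩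

theorem revLexGT_or_revLexGT {A B : Fin n → ℕ} (hne : A ≠ B) : RevLexGT A B ∨ RevLexGT B A := by
  rcases lt_trichotomy (mdeg A) (mdeg B) with hd | hd | hd
  · exact Or.inr (Or.inl hd)
  · have hdiff : (Finset.univ.filter fun i => A i ≠ B i).Nonempty := by
      by_contra hcon
      simp only [Finset.not_nonempty_iff_eq_empty, Finset.filter_eq_empty_iff,
        Finset.mem_univ, not_not, forall_const] at hcon
      exact hne (funext hcon)
    set s := (Finset.univ.filter fun i => A i ≠ B i).max' hdiff
    have hs : A s ≠ B s := (Finset.mem_filter.1 (Finset.max'_mem _ hdiff)).2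
    have heq : ∀ i, s < i → A i = B i := fun i hi => by
      by_contra hAB
      exact (Finset.le_max' _ i (Finset.mem_filter.2 ⟨Finset.mem_univ i, hAB⟩)).not_gt hi
    rcases hs.lt_or_gt with hlt | hlt
    · exact Or.inl (Or.inr ⟨hd, s, heq, hlt⟩)
    · exact Or.inr (Or.inr ⟨hd.symm, s, fun i hi => (heq i hi).symm, hlt⟩)
  · exact Or.inl (Or.inl hd)

instance : IsStrictTotalOrder (Fin n → ℕ) (flip RevLexGT) where
  irrefl := revLexGT_irrefl
  trans _ _ _ hab hbc := RevLexGT.trans hbc hab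
  trichotomous A B hAB hBA := by
    by_contra hne
    exact (revLexGT_or_revLexGT hne).elim hBA hAB

theorem revLexGT_sub_single_add_single {m : Fin n → ℕ} {i j : Fin n} (hij : i < j)
    (hi : 0 < m i) : RevLexGT m (m - Pi.single i 1 + Pi.single j 1) := by
  refine Or.inr ⟨by rw [mdeg_add, mdeg_single, mdeg_sub_single hi], j, fun k hk => ?_, ?_⟩ <;>
    simp only [Pi.add_apply, Pi.sub_apply, Pi.single_apply]
  · rw [if_neg (hij.trans hk).ne', if_neg hk.ne']
    rfl
  · rw [if_neg hij.ne']
    simp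

end RevLex

section MaxVar

variable {n : ℕ} {m : Fin n → ℕ}

theorem maxVar_le_iff {j : ℕ} : maxVar m ≤ j ↔ ∀ i : Fin n, 0 < m i → i.1 + 1 ≤ j := by
  simp only [maxVar, Finset.sup_le_iff, Finset.mem_univ, true_implies]
  refine forall_congr' fun i => ?_
  split_ifs with hi <;> simp [hi]

theorem le_maxVar {i : Fin n} (hi : 0 < m i) : i.1 + 1 ≤ maxVar m :=
  maxVar_le_iff.1 le_rfl i hi

theorem maxVar_le (m : Fin n → ℕ) : maxVar m ≤ n :=
  maxVar_le_iff.2 fun i _ => i.2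

theorem pos_of_maxVar_eq {i : Fin n} (hv : maxVar m = i.1 + 1) : 0 < m i := by
  by_contra hi
  have : maxVar m ≤ i.1 := maxVar_le_iff.2 fun k hk => by
    have := le_maxVar hk
    have : k ≠ i := by rintro rfl; exact hi hk
    have : k.1 ≠ i.1 := Fin.val_ne_of_ne this
    omega
  omega

theorem revLexGT_of_maxVar {A B : Fin n → ℕ} {j : ℕ} (hdeg : mdeg A = mdeg B)
    (hA : maxVar A ≤ j) (hB : j < maxVar B) : RevLexGT A B := by
  obtain ⟨s, hs⟩ : ∃ s : Fin n, maxVar B = s.1 + 1 :=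
    ⟨⟨maxVar B - 1, by have := maxVar_le B; omega⟩, by dsimp only; omega⟩
  have hA0 : ∀ i : Fin n, s ≤ i → A i = 0 := fun i hi => by
    by_contra hAi
    have := le_maxVar (Nat.pos_of_ne_zero hAi)
    have : s.1 ≤ i.1 := hi
    omega
  have hB0 : ∀ i : Fin n, s < i → B i = 0 := fun i hi => by
    by_contra hBi
    have := le_maxVar (Nat.pos_of_ne_zero hBi)
    have : s.1 < i.1 := hi
    omega
  refine Or.inr ⟨hdeg, s, fun i hi => by rw [hA0 i hi.le, hB0 i hi], ?_⟩
  rw [hA0 s le_rfl]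
  exact pos_of_maxVar_eq hs

end MaxVar

section Hseq

variable {h : ℕ → ℕ}

theorem hseq_zero_right (h0 : h 0 = 1) : ∀ i, hseq h i 0 = 1
  | 0 => h0
  | _ + 1 => rfl

theorem hseq_one_right (h0 : h 0 = 1) : ∀ i, hseq h i 1 = h 1 - i
  | 0 => rfl
  | i + 1 => by rw [hseq, hseq_one_right h0 i, hseq_zero_right h0, Nat.sub_sub]

theorem hseq_succ_right_eq_sub_sum (d : ℕ) : ∀ i,
    hseq h i (d + 1) = h (d + 1) - ∑ l ∈ Finset.range i, hseq h l d
  | 0 => rfl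
  | i + 1 => by rw [hseq, hseq_succ_right_eq_sub_sum d i, Finset.sum_range_succ, Nat.sub_sub]

/-- With `n = max h_1 1`: since `h^{(n-1)}_1 = h_1 - (n-1) ≤ 1 = h^{(n-1)}_0`, we have
`r_{n-1} = 1`, so unimodality gives `h^{(n-1)}_{d+1} ≤ h^{(n-1)}_d`, i.e. `h^{(n)}_{d+1} = 0`. -/
theorem UnimodalAtTails.hseq_succ_right_eq_zero (h0 : h 0 = 1) (hu : UnimodalAtTails h)
    (d : ℕ) : hseq h (max (h 1) 1) (d + 1) = 0 := by
  obtain ⟨i, hi⟩ : ∃ i, max (h 1) 1 = i + 1 := ⟨max (h 1) 1 - 1, by omega⟩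
  have hr : 1 ∈ rset h i := ⟨le_rfl, by
    rw [hseq_one_right h0, hseq_zero_right h0]
    omega⟩
  have hmono : hseq h i (d + 1) ≤ hseq h i d :=
    hu i (Nat.sInf_le ⟨1, hr⟩) (by rw [max_comm]; omega) (d + 1) ⟨1, hr, by omega⟩
  rw [hi, hseq, Nat.sub_eq_zero_of_le hmono]

theorem UnimodalAtTails.le_sum_hseq (h0 : h 0 = 1) (hu : UnimodalAtTails h) (d : ℕ) :
    h (d + 1) ≤ ∑ l ∈ Finset.range (max (h 1) 1), hseq h l d := by
  have := hu.hseq_succ_right_eq_zero h0 d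
  rw [hseq_succ_right_eq_sub_sum] at this
  omega

end Hseq

section Greedy

open Finset

variable {n : ℕ}

noncomputable def candidates (C : Finset (Fin n → ℕ)) (d : ℕ) : Finset (Fin n → ℕ) :=
  {μ ∈ Nat.antidiagonalTuple n d | ∀ i, 0 < μ i → μ - Pi.single i 1 ∈ C}

theorem mem_candidates {C : Finset (Fin n → ℕ)} {d : ℕ} {μ : Fin n → ℕ} :
    μ ∈ candidates C d ↔ mdeg μ = d ∧ ∀ i, 0 < μ i → μ - Pi.single i 1 ∈ C := by
  rw [candidates, mem_filter, Nat.mem_antidiagonalTuple, mdeg]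

noncomputable def greedyStd (h : ℕ → ℕ) (n : ℕ) : ℕ → Finset (Fin n → ℕ)
  | 0 => {0}
  | d + 1 => (candidates (greedyStd h n d) (d + 1)).lowest (flip RevLexGT) (h (d + 1))

def greedyIdeal (h : ℕ → ℕ) (n : ℕ) : Set (Fin n → ℕ) := {m | m ∉ greedyStd h n (mdeg m)}

variable {h : ℕ → ℕ} {d : ℕ}

theorem mdeg_of_mem_greedyStd {m : Fin n → ℕ} (hm : m ∈ greedyStd h n d) : mdeg m = d := by
  cases d with
  | zero => exact mdeg_eq_zero_iff.2 (mem_singleton.1 hm)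
  | succ d => exact (mem_candidates.1 (lowest_subset hm)).1

theorem greedyStd_succ_subset : greedyStd h n (d + 1) ⊆ candidates (greedyStd h n d) (d + 1) :=
  lowest_subset

theorem sub_single_mem_greedyStd {m : Fin n → ℕ} (hm : m ∈ greedyStd h n (d + 1)) {i : Fin n}
    (hi : 0 < m i) : m - Pi.single i 1 ∈ greedyStd h n d :=
  (mem_candidates.1 (greedyStd_succ_subset hm)).2 i hi

theorem mem_greedyStd_of_revLexGT {μ ν : Fin n → ℕ} (hμ : μ ∈ greedyStd h n (d + 1))
    (hν : ν ∈ candidates (greedyStd h n d) (d + 1)) (hμν : RevLexGT μ ν) :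
    ν ∈ greedyStd h n (d + 1) :=
  mem_lowest_of_rel hμ hν hμν

theorem greedyStd_sub_single_add_single : ∀ {d} {m : Fin n → ℕ}, m ∈ greedyStd h n d →
    ∀ {i j : Fin n}, i < j → 0 < m i → m - Pi.single i 1 + Pi.single j 1 ∈ greedyStd h n d
  | 0, m, hm, i, j, _, hi => by
    obtain rfl := mem_singleton.1 hm
    exact absurd hi (lt_irrefl 0)
  | d + 1, m, hm, i, j, hij, hi => by
    refine mem_greedyStd_of_revLexGT hm (mem_candidates.2 ⟨?_, fun l hl => ?_⟩)
      (revLexGT_sub_single_add_single hij hi)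
    · rw [mdeg_add, mdeg_single, mdeg_sub_single hi,
        (mem_candidates.1 (greedyStd_succ_subset hm)).1]
    by_cases hlj : l = j
    · subst hlj
      rw [add_tsub_cancel_right]
      exact sub_single_mem_greedyStd hm hi
    · have hml : 0 < m l := by
        simp only [Pi.add_apply, Pi.sub_apply, Pi.single_apply, if_neg hlj] at hl
        omega
      have hmove : m - Pi.single i 1 + Pi.single j 1 - Pi.single l 1
          = m - Pi.single l 1 - Pi.single i 1 + Pi.single j 1 := by
        ext k
        simp only [Pi.add_apply, Pi.sub_apply, Pi.single_apply]
        split_ifs <;> omega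
      have hil : 0 < (m - Pi.single l 1 : Fin n → ℕ) i := by
        rcases eq_or_ne l i with rfl | hli
        · simpa [hlj] using hl
        · simpa [Pi.single_apply, hli.symm] using hi
      rw [hmove]
      exact greedyStd_sub_single_add_single (sub_single_mem_greedyStd hm hml) hij hil

theorem mem_greedyStd_of_le : ∀ {d} {m m' : Fin n → ℕ}, m' ∈ greedyStd h n d → m ≤ m' →
    m ∈ greedyStd h n (mdeg m)
  | 0, m, m', hm', hle => by
    rw [greedyStd, mem_singleton] at hm'
    subst hm'
    rw [le_antisymm hle fun _ => Nat.zero_le _, mdeg_eq_zero_iff.2 rfl]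
    exact mem_singleton_self 0
  | d + 1, m, m', hm', hle => by
    by_cases heq : m = m'
    · rwa [heq, mdeg_of_mem_greedyStd hm']
    obtain ⟨i, hi⟩ : ∃ i, m i < m' i := by
      by_contra! hcon
      exact heq (le_antisymm hle hcon)
    refine mem_greedyStd_of_le (sub_single_mem_greedyStd hm' (i := i) (by omega)) fun k => ?_
    simp only [Pi.sub_apply, Pi.single_apply]
    have := hle k
    split_ifs with hk
    · subst hk; omega
    · omega

end Greedy

section Count

open Finset

variable {n : ℕ} {h : ℕ → ℕ} {d : ℕ}

theorem maxVar_add_single {m : Fin n → ℕ} {v : Fin n} (hm : maxVar m ≤ v.1 + 1) :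
    maxVar (m + Pi.single v 1) = v.1 + 1 := by
  refine le_antisymm (maxVar_le_iff.2 fun k hk => ?_) (le_maxVar (by simp))
  by_cases hkv : k = v
  · rw [hkv]
  · simp only [Pi.add_apply, Pi.single_apply, if_neg hkv, add_zero] at hk
    exact (le_maxVar hk).trans hm

theorem maxVar_sub_single_le (m : Fin n → ℕ) (v : Fin n) :
    maxVar (m - Pi.single v 1) ≤ maxVar m :=
  maxVar_le_iff.2 fun _ hk => le_maxVar (lt_of_lt_of_le hk (Nat.sub_le _ _))

theorem card_candidates_maxVar_eq (v : Fin n) :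
    #{μ ∈ candidates (greedyStd h n d) (d + 1) | maxVar μ = v.1 + 1} =
      #{m ∈ greedyStd h n d | maxVar m ≤ v.1 + 1} := by
  refine card_nbij' (· - Pi.single v 1) (· + Pi.single v 1) (fun μ hμ => ?_) (fun m hm => ?_)
    (fun μ hμ => ?_) (fun m _ => add_tsub_cancel_right m _)
  · obtain ⟨hμC, hμv⟩ := mem_filter.1 hμ
    exact mem_filter.2 ⟨(mem_candidates.1 hμC).2 v (pos_of_maxVar_eq hμv),
      hμv ▸ maxVar_sub_single_le μ v⟩
  · obtain ⟨hmS, hmv⟩ := mem_filter.1 hm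
    refine mem_filter.2 ⟨mem_candidates.2 ⟨?_, fun l hl => ?_⟩, maxVar_add_single hmv⟩
    · rw [mdeg_add, mdeg_single, mdeg_of_mem_greedyStd hmS]
    by_cases hlv : l = v
    · rw [hlv, add_tsub_cancel_right]
      exact hmS
    · have hml : 0 < m l := by simpa [Pi.single_apply, hlv] using hl
      have hlt : l < v := Fin.lt_def.2 (by
        have := le_maxVar hml
        have := Fin.val_ne_of_ne hlv
        omega)
      have hcomm : m + Pi.single v 1 - Pi.single l 1 = m - Pi.single l 1 + Pi.single v 1 := by
        ext k
        simp only [Pi.add_apply, Pi.sub_apply, Pi.single_apply]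
        split_ifs <;> omega
      rw [hcomm]
      exact greedyStd_sub_single_add_single hmS hlt hml
  · exact sub_single_add_single (pos_of_maxVar_eq (mem_filter.1 hμ).2)

theorem card_candidates_lt_maxVar
    (ih : ∀ j ≤ n, #{m ∈ greedyStd h n d | maxVar m ≤ j} = hseq h (n - j) d) :
    ∀ i ≤ n, #{μ ∈ candidates (greedyStd h n d) (d + 1) | n - i < maxVar μ} =
      ∑ l ∈ range i, hseq h l d
  | 0, _ => by
    rw [sum_range_zero, card_eq_zero, filter_eq_empty_iff]
    exact fun μ _ hμ => by
      have := maxVar_le μ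
      omega
  | i + 1, hi => by
    set C := candidates (greedyStd h n d) (d + 1)
    have hsplit : {μ ∈ C | n - (i + 1) < maxVar μ} =
        {μ ∈ C | n - i < maxVar μ} ∪ {μ ∈ C | maxVar μ = (n - (i + 1) : ℕ) + 1} := by
      rw [← filter_or]
      exact filter_congr fun μ _ => by omega
    have hfib : #{μ ∈ C | maxVar μ = (n - (i + 1) : ℕ) + 1} =
        #{m ∈ greedyStd h n d | maxVar m ≤ n - (i + 1) + 1} :=
      card_candidates_maxVar_eq ⟨n - (i + 1), by omega⟩
    rw [ih _ (by omega), show n - (n - (i + 1) + 1) = i by omega] at hfib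
    rw [hsplit, card_union_of_disjoint (disjoint_filter.2 fun μ _ hμ => by omega),
      card_candidates_lt_maxVar ih i (by omega), hfib, sum_range_succ]

theorem card_greedyStd_maxVar_le (h0 : h 0 = 1)
    (hgrow : ∀ d, h (d + 1) ≤ ∑ l ∈ range n, hseq h l d) :
    ∀ d, ∀ j ≤ n, #{m ∈ greedyStd h n d | maxVar m ≤ j} = hseq h (n - j) d
  | 0, j, _ => by
    rw [hseq_zero_right h0, greedyStd, filter_singleton,
      if_pos (maxVar_le_iff.2 fun _ hi => (lt_irrefl 0 hi).elim : maxVar (0 : Fin n → ℕ) ≤ j),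
      card_singleton]
  | d + 1, j, hj => by
    have ih := card_greedyStd_maxVar_le h0 hgrow d
    have hroom : h (d + 1) ≤ #(candidates (greedyStd h n d) (d + 1)) := by
      have := card_candidates_lt_maxVar ih n le_rfl
      rw [Nat.sub_self] at this
      exact (hgrow d).trans (this ▸ card_filter_le _ _)
    have hupper := card_candidates_lt_maxVar ih (n - j) (Nat.sub_le n j)
    rw [Nat.sub_sub_self hj] at hupper
    rw [greedyStd, card_filter_lowest hroom, hseq_succ_right_eq_sub_sum]
    · simp only [not_le, hupper]
    · intro a ha b hb hja hjb
      exact revLexGT_of_maxVar (by rw [(mem_candidates.1 ha).1, (mem_candidates.1 hb).1]) hja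
        (not_le.1 hjb)

end Count

section GreedyIdeal

open Finset

variable {n : ℕ} {h : ℕ → ℕ}

theorem monIdeal_greedyIdeal : MonIdeal (greedyIdeal h n) :=
  fun _ hm _ hle hm' => hm (mem_greedyStd_of_le hm' hle)

theorem mem_candidates_of_minGen {N : Fin n → ℕ} {e : ℕ} (hN : MinGen (greedyIdeal h n) N)
    (hdeg : mdeg N = e + 1) : N ∈ candidates (greedyStd h n e) (e + 1) := by
  refine mem_candidates.2 ⟨hdeg, fun i hi => ?_⟩
  have hdiv : N - Pi.single i 1 ∉ greedyIdeal h n := fun hmem => by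
    have := congrFun (hN.2 _ hmem fun k => Nat.sub_le _ _) i
    simp only [Pi.sub_apply, Pi.single_eq_same] at this
    omega
  have hdeg' : mdeg (N - Pi.single i 1) = e := by
    have := mdeg_sub_single hi
    omega
  simpa [greedyIdeal, hdeg'] using hdiv

theorem arl_greedyIdeal : ARL (greedyIdeal h n) := by
  intro M N hN hdeg hMN hM
  apply hN.1
  cases he : mdeg N with
  | zero =>
    rw [mdeg_eq_zero_iff.1 he]
    exact mem_singleton_self 0
  | succ e =>
    have hM' : M ∈ greedyStd h n (e + 1) := by simpa [greedyIdeal, hdeg, he] using hM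
    exact mem_greedyStd_of_revLexGT hM' (mem_candidates_of_minGen hN he) hMN

theorem hilb_greedyIdeal (h0 : h 0 = 1) (hgrow : ∀ d, h (d + 1) ≤ ∑ l ∈ range n, hseq h l d)
    (d : ℕ) : hilb (greedyIdeal h n) d = h d := by
  have hset : {m : Fin n → ℕ | mdeg m = d ∧ m ∉ greedyIdeal h n} = ↑(greedyStd h n d) := by
    ext m
    simp only [greedyIdeal, Set.mem_ofPred_eq, not_not, mem_coe]
    exact ⟨fun ⟨hd, hm⟩ => hd ▸ hm,
      fun hm => ⟨mdeg_of_mem_greedyStd hm, (mdeg_of_mem_greedyStd hm).symm ▸ hm⟩⟩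
  rw [hilb, hset, Set.ncard_coe_finset,
    ← filter_true_of_mem (s := greedyStd h n d) fun m _ => maxVar_le m,
    card_greedyStd_maxVar_le h0 hgrow d n le_rfl, Nat.sub_self]
  rfl

end GreedyIdeal

/-- A sequence that is unimodal at each tail is the Hilbert
function of an almost reverse lexicographic ideal in `k[x_1,…,x_n]` with
`n = h_1` if `h_1 ≥ 1` and `n = 1` otherwise. -/
theorem unimodal_at_tails_realizable (h : ℕ → ℕ) (h0 : h 0 = 1)
    (hu : UnimodalAtTails h) :
    ∃ I : Set (Fin (max (h 1) 1) → ℕ),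
      MonIdeal I ∧ ARL I ∧ ∀ d, hilb I d = h d :=
  ⟨greedyIdeal h _, monIdeal_greedyIdeal, arl_greedyIdeal,
    hilb_greedyIdeal h0 (hu.le_sum_hseq h0)⟩
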